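/- Let U ⊆ A^{ℤ²} be an additive shift space, let Ω = {Ω(n)}_{n≥1} be an expanding system of finite subsets of ℤ², and let {T(n)}_{n≥1} be a sequence of tessellations of ℤ² with Ω(n) ⊂ T(n); set Ω'(n) = T(n) \ Ω(n). If limsup_{n→∞} |∂Ω(n)|/|Ω(n)| = 0, limsup_{n→∞} |∂Ω'(n)|/|Ω'(n)| = 0, and sup_{n≥1} |Ω'(n)|/|Ω(n)| < ∞, then h_Ω(U) = h_r(U). -/

import Mathlib

/-!
Upper bound: cut `Ω(n)` along the `k × l` grid. By translation invariance and subadditivity of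
`log Γ`, each grid cell inside `Ω(n)` contributes at most `log Γ_{k×l}(U)`. Every other site lies in
a cell containing a point of `Ω(n)` with a lattice neighbour outside `Ω(n)`; there are at most
`3 |∂Ω(n)|` such points, because the points missing their left (lower) neighbour are exactly as
many as those missing their right (upper) one. So the remainder costs `O(kl |∂Ω(n)| log N)`.

Lower bound: translates of a tessellating tile `T` cover an `m × m` square using about `m² / |T|`
tiles, whence `|T| h_r(U) ≤ log Γ(T, U)`. Splitting `T(n) = Ω(n) ⊔ Ω'(n)` and applying the upper
bound to `Ω'(n)` gives
`|Ω(n)| h_r ≤ log Γ(Ω(n)) + |Ω'(n)| (h_{k×l} - h_r) + O(kl |∂Ω'(n)|)`,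
and the hypotheses on `Ω'(n)` make both error terms small compared with `|Ω(n)|`.
-/

open Filter
open scoped Classical

/-- The `m × n` rectangular lattice `Z_{m×n}(p)` with bottom-left corner `p`. -/
def Zrect (m n : ℕ) (p : ℤ × ℤ) : Finset (ℤ × ℤ) :=
  (Finset.range m ×ˢ Finset.range n).image (fun ab => (p.1 + (ab.1 : ℤ), p.2 + (ab.2 : ℤ)))

/-- The number of patterns of `U` seen on the finite window `L`. -/
noncomputable def patternCount {A : Type*} (U : Set ((ℤ × ℤ) → A)) (L : Finset (ℤ × ℤ)) : ℕ :=
  Set.ncard ((fun x => fun p : L => x (p : ℤ × ℤ)) '' U)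

/-- An additive shift space: nonempty, closed, translation invariant. -/
def IsShiftSpace {A : Type*} [TopologicalSpace A] (U : Set ((ℤ × ℤ) → A)) : Prop :=
  U.Nonempty ∧ IsClosed U ∧ ∀ v : ℤ × ℤ, ∀ x ∈ U, (fun p => x (p + v)) ∈ U

/-- An expanding system of finite sublattices of `ℤ²`. -/
def IsExpandingSystem (Ω : ℕ → Finset (ℤ × ℤ)) : Prop :=
  (∀ n, Ω n ⊂ Ω (n + 1)) ∧ ∀ p : ℤ × ℤ, ∃ n, p ∈ Ω n

/-- The interior of a finite lattice. -/
def latInterior (L : Finset (ℤ × ℤ)) : Finset (ℤ × ℤ) :=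
  L.filter (fun p => (p.1 + 1, p.2) ∈ L ∧ (p.1, p.2 + 1) ∈ L ∧ (p.1 + 1, p.2 + 1) ∈ L)

/-- The boundary of a finite lattice. -/
def latBoundary (L : Finset (ℤ × ℤ)) : Finset (ℤ × ℤ) := L \ latInterior L

/-- The rectangular entropy `h_r(U)`. -/
noncomputable def rectEntropy {A : Type*} (U : Set ((ℤ × ℤ) → A)) : ℝ :=
  ⨅ mn : ℕ × ℕ, (1 / (((mn.1 + 1) * (mn.2 + 1) : ℕ) : ℝ)) *
    Real.log (patternCount U (Zrect (mn.1 + 1) (mn.2 + 1) (0, 0)))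

/-- The entropy `h_Ω(U)` along an expanding system `Ω`. -/
noncomputable def entropyAlong {A : Type*} (U : Set ((ℤ × ℤ) → A)) (Ω : ℕ → Finset (ℤ × ℤ)) : ℝ :=
  Filter.limsup (fun n => (1 / ((Ω n).card : ℝ)) * Real.log (patternCount U (Ω n))) Filter.atTop

/-- `Ω_{k,l}(n)`: the union of grid rectangles `Z_{k×l}((ak,bl))` contained in `L`. -/
noncomputable def gridPart (k l : ℕ) (L : Finset (ℤ × ℤ)) : Finset (ℤ × ℤ) :=
  L.filter (fun p => ∃ a b : ℤ,
    p ∈ Zrect k l ((k : ℤ) * a, (l : ℤ) * b) ∧ Zrect k l ((k : ℤ) * a, (l : ℤ) * b) ⊆ L)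

/-- `β_{k,l}` : the size of the complement of the grid part. -/
noncomputable def betaKL (k l : ℕ) (L : Finset (ℤ × ℤ)) : ℕ := (L \ gridPart k l L).card

/-- `α_{k,l}` : the number of grid rectangles contained in `L`. -/
noncomputable def alphaKL (k l : ℕ) (L : Finset (ℤ × ℤ)) : ℕ :=
  Set.ncard {ab : ℤ × ℤ | Zrect k l ((k : ℤ) * ab.1, (l : ℤ) * ab.2) ⊆ L}

/-- A tessellation of `ℤ²`. -/
def IsTessellation (T : Finset (ℤ × ℤ)) : Prop :=
  ∃ v : ℕ → ℤ × ℤ,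
    (∀ i j : ℕ, i ≠ j → Disjoint (T.image (· + v i)) (T.image (· + v j))) ∧
    ∀ p : ℤ × ℤ, ∃ i : ℕ, p ∈ T.image (· + v i)

/-- Euclidean distance between points of `ℤ²`. -/
noncomputable def euclDist (p q : ℤ × ℤ) : ℝ :=
  Real.sqrt (((p.1 - q.1 : ℤ) : ℝ) ^ 2 + ((p.2 - q.2 : ℤ) : ℝ) ^ 2)

/-- Block gluing with gap `M`. -/
def BlockGluingWithGap {A : Type*} (U : Set ((ℤ × ℤ) → A)) (M : ℕ) : Prop :=
  ∀ (m₁ n₁ m₂ n₂ : ℕ) (c₁ c₂ : ℤ × ℤ),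
    (∀ p ∈ Zrect m₁ n₁ c₁, ∀ q ∈ Zrect m₂ n₂ c₂, (M : ℝ) ≤ euclDist p q) →
    ∀ x₁ ∈ U, ∀ x₂ ∈ U, ∃ x ∈ U,
      (∀ p ∈ Zrect m₁ n₁ c₁, x p = x₁ p) ∧ ∀ q ∈ Zrect m₂ n₂ c₂, x q = x₂ q

/-- Block gluing. -/
def IsBlockGluing {A : Type*} (U : Set ((ℤ × ℤ) → A)) : Prop :=
  ∃ M : ℕ, 1 ≤ M ∧ BlockGluingWithGap U M

/-- A full shift on a sub-alphabet. -/
def IsFullShift {A : Type*} (U : Set ((ℤ × ℤ) → A)) : Prop :=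
  ∃ B : Set A, U = {x | ∀ p : ℤ × ℤ, x p ∈ B}

/-- Shift of finite type. -/
def IsSFT {A : Type*} (U : Set ((ℤ × ℤ) → A)) : Prop :=
  ∃ (F : Finset (ℤ × ℤ)) (P : Set (F → A)),
    U = {x | ∀ v : ℤ × ℤ, (fun p : F => x (v + (p : ℤ × ℤ))) ∈ P}

/-- `(i,j)` has horizontal length `m` in `L`. -/
def HasHorizLength (L : Finset (ℤ × ℤ)) (p : ℤ × ℤ) (m : ℕ) : Prop :=
  1 ≤ m ∧ (∃ c : ℤ × ℤ, p ∈ Zrect m 1 c ∧ Zrect m 1 c ⊆ L) ∧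
    ∀ m' : ℕ, m < m' → ¬ ∃ c : ℤ × ℤ, p ∈ Zrect m' 1 c ∧ Zrect m' 1 c ⊆ L

/-- `(i,j)` has vertical length `m` in `L`. -/
def HasVertLength (L : Finset (ℤ × ℤ)) (p : ℤ × ℤ) (m : ℕ) : Prop :=
  1 ≤ m ∧ (∃ c : ℤ × ℤ, p ∈ Zrect 1 m c ∧ Zrect 1 m c ⊆ L) ∧
    ∀ m' : ℕ, m < m' → ¬ ∃ c : ℤ × ℤ, p ∈ Zrect 1 m' c ∧ Zrect 1 m' c ⊆ L

noncomputable def betaHoriz (m : ℕ) (L : Finset (ℤ × ℤ)) : ℕ :=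
  (L.filter (fun p => HasHorizLength L p m)).card

noncomputable def betaVert (m : ℕ) (L : Finset (ℤ × ℤ)) : ℕ :=
  (L.filter (fun p => HasVertLength L p m)).card

/-- The one-dimensional sublattice segment `{s • v : 0 ≤ s ≤ n-1}`. -/
def lineSegment (v : ℤ × ℤ) (n : ℕ) : Finset (ℤ × ℤ) :=
  (Finset.range n).image (fun s : ℕ => ((s : ℤ) * v.1, (s : ℤ) * v.2))

/-- The projectional entropy along the one-dimensional sublattice generated by `v`. -/
noncomputable def projEntropy {A : Type*} (U : Set ((ℤ × ℤ) → A)) (v : ℤ × ℤ) : ℝ :=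
  ⨅ n : ℕ, (1 / (n + 1 : ℝ)) * Real.log (patternCount U (lineSegment v (n + 1)))

/-- `ĥ⁽¹⁾(U)`: supremum of projectional entropies over one-dimensional sublattices. -/
noncomputable def hHatOne {A : Type*} (U : Set ((ℤ × ℤ) → A)) : ℝ :=
  ⨆ v : {w : ℤ × ℤ // w ≠ 0}, projEntropy U (v : ℤ × ℤ)

/-- The horizontal golden-mean shift. -/
def goldenMeanShift : Set ((ℤ × ℤ) → Fin 2) :=
  {x | ∀ p : ℤ × ℤ, x p * x (p.1 + 1, p.2) = 0}

/-- The sequence `a_k`: `a_1 = 2`, `a_2 = 3`, `a_k = a_{k-1} + a_{k-2}`. -/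
def aSeq : ℕ → ℕ
  | 0 => 1
  | 1 => 2
  | (k + 2) => aSeq (k + 1) + aSeq k

open Finset Real Topology

section PatternCount

variable {A : Type*} {U : Set ((ℤ × ℤ) → A)}

theorem patternCount_pos [Finite A] (hU : U.Nonempty) (L : Finset (ℤ × ℤ)) : 0 < patternCount U L :=
  Set.ncard_pos (Set.toFinite _) |>.mpr (hU.image _)

theorem patternCount_le_card_pow [Fintype A] (L : Finset (ℤ × ℤ)) :
    patternCount U L ≤ Fintype.card A ^ #L := by
  calc patternCount U L ≤ Nat.card (L → A) := Set.ncard_le_card _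
    _ = Fintype.card A ^ #L := by simp

theorem patternCount_mono [Finite A] {L L' : Finset (ℤ × ℤ)} (h : L' ⊆ L) :
    patternCount U L' ≤ patternCount U L := by
  have : (fun x => fun p : L' => x (p : ℤ × ℤ)) '' U
      = (fun (g : L → A) (p : L') => g ⟨p, h p.2⟩) ''
          ((fun x => fun p : L => x (p : ℤ × ℤ)) '' U) := by
    rw [← Set.image_comp]; rfl
  rw [patternCount, patternCount, this]
  exact Set.ncard_image_le (Set.toFinite _)

theorem patternCount_union_le [Finite A] (L L' : Finset (ℤ × ℤ)) :
    patternCount U (L ∪ L') ≤ patternCount U L * patternCount U L' := by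
  set restrict : ((L ∪ L' : Finset (ℤ × ℤ)) → A) → (L → A) × (L' → A) := fun g =>
    (fun p => g ⟨p, mem_union_left _ p.2⟩, fun p => g ⟨p, mem_union_right _ p.2⟩)
  have hinj : Function.Injective restrict := by
    intro g g' hgg
    funext p
    rcases mem_union.mp p.2 with hp | hp
    · exact congrFun (congrArg Prod.fst hgg) ⟨p, hp⟩
    · exact congrFun (congrArg Prod.snd hgg) ⟨p, hp⟩
  have hsub : restrict '' ((fun x => fun p : (L ∪ L' : Finset (ℤ × ℤ)) => x p) '' U) ⊆
      ((fun x => fun p : L => x p) '' U) ×ˢ ((fun x => fun p : L' => x p) '' U) := by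
    rintro _ ⟨_, ⟨x, hx, rfl⟩, rfl⟩
    exact ⟨⟨x, hx, rfl⟩, ⟨x, hx, rfl⟩⟩
  rw [patternCount, ← Set.ncard_image_of_injective _ hinj, patternCount, patternCount,
    ← Set.ncard_prod]
  exact Set.ncard_le_ncard hsub (Set.toFinite _)

theorem patternCount_image_add_le [Finite A]
    (hinv : ∀ v : ℤ × ℤ, ∀ x ∈ U, (fun p => x (p + v)) ∈ U) (L : Finset (ℤ × ℤ)) (v : ℤ × ℤ) :
    patternCount U (L.image (· + v)) ≤ patternCount U L := by
  have hmem : ∀ p ∈ L, p + v ∈ L.image (· + v) := fun p hp => mem_image_of_mem _ hp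
  set pullback : (L.image (· + v) → A) → (L → A) := fun g p => g ⟨p + v, hmem _ p.2⟩
  have hinj : Function.Injective pullback := by
    intro g g' hgg
    funext ⟨q, hq⟩
    obtain ⟨p, hp, rfl⟩ := mem_image.mp hq
    exact congrFun hgg ⟨p, hp⟩
  have hsub : pullback '' ((fun x => fun p : L.image (· + v) => x p) '' U)
      ⊆ (fun x => fun p : L => x p) '' U := by
    rintro _ ⟨_, ⟨x, hx, rfl⟩, rfl⟩
    exact ⟨fun p => x (p + v), hinv v x hx, rfl⟩
  rw [patternCount, ← Set.ncard_image_of_injective _ hinj]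
  exact Set.ncard_le_ncard hsub (Set.toFinite _)

theorem log_patternCount_le [Fintype A] (hU : U.Nonempty) (L : Finset (ℤ × ℤ)) :
    log (patternCount U L) ≤ #L * log (Fintype.card A) := by
  rw [← log_pow]
  exact log_le_log (by exact_mod_cast patternCount_pos hU L)
    (by exact_mod_cast patternCount_le_card_pow L)

variable [Finite A]

theorem log_patternCount_nonneg (hU : U.Nonempty) (L : Finset (ℤ × ℤ)) :
    0 ≤ log (patternCount U L) :=
  log_nonneg (by exact_mod_cast patternCount_pos hU L)

theorem entropyRatio_nonneg (hU : U.Nonempty) (L : Finset (ℤ × ℤ)) :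
    0 ≤ 1 / #L * log (patternCount U L) :=
  mul_nonneg (by positivity) (log_patternCount_nonneg hU L)

theorem log_patternCount_mono (hU : U.Nonempty) {L L' : Finset (ℤ × ℤ)} (h : L' ⊆ L) :
    log (patternCount U L') ≤ log (patternCount U L) :=
  log_le_log (by exact_mod_cast patternCount_pos hU L') (by exact_mod_cast patternCount_mono h)

theorem log_patternCount_union_le (hU : U.Nonempty) (L L' : Finset (ℤ × ℤ)) :
    log (patternCount U (L ∪ L')) ≤ log (patternCount U L) + log (patternCount U L') := by
  rw [← log_mul (by exact_mod_cast (patternCount_pos hU L).ne')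
    (by exact_mod_cast (patternCount_pos hU L').ne')]
  exact log_le_log (by exact_mod_cast patternCount_pos hU _)
    (by exact_mod_cast patternCount_union_le L L')

theorem log_patternCount_biUnion_le (hU : U.Nonempty) {ι : Type*} (J : Finset ι)
    (f : ι → Finset (ℤ × ℤ)) :
    log (patternCount U (J.biUnion f)) ≤ ∑ j ∈ J, log (patternCount U (f j)) := by
  classical
  induction J using Finset.induction with
  | empty =>
    have : patternCount U ∅ ≤ 1 := (Set.ncard_le_card _).trans (by simp)
    simpa using log_nonpos (Nat.cast_nonneg _) (by exact_mod_cast this)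
  | insert j J hj ih =>
    rw [biUnion_insert, sum_insert hj]
    exact (log_patternCount_union_le hU _ _).trans (by gcongr)

theorem log_patternCount_image_add_le (hU : U.Nonempty)
    (hinv : ∀ v : ℤ × ℤ, ∀ x ∈ U, (fun p => x (p + v)) ∈ U) (L : Finset (ℤ × ℤ)) (v : ℤ × ℤ) :
    log (patternCount U (L.image (· + v))) ≤ log (patternCount U L) :=
  log_le_log (by exact_mod_cast patternCount_pos hU _)
    (by exact_mod_cast patternCount_image_add_le hinv L v)

end PatternCount

section Grid

theorem mem_Zrect {m n : ℕ} {c q : ℤ × ℤ} :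
    q ∈ Zrect m n c ↔ c.1 ≤ q.1 ∧ q.1 < c.1 + m ∧ c.2 ≤ q.2 ∧ q.2 < c.2 + n := by
  simp only [Zrect, mem_image, mem_product, mem_range]
  constructor
  · rintro ⟨⟨a, b⟩, ⟨ha, hb⟩, rfl⟩
    omega
  · rintro ⟨h1, h2, h3, h4⟩
    exact ⟨((q.1 - c.1).toNat, (q.2 - c.2).toNat), ⟨by omega, by omega⟩,
      Prod.ext (by simp; omega) (by simp; omega)⟩

theorem card_Zrect (m n : ℕ) (c : ℤ × ℤ) : #(Zrect m n c) = m * n := by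
  rw [Zrect, card_image_of_injective, card_product, card_range, card_range]
  rintro ⟨a, b⟩ ⟨a', b'⟩ h
  simp only [Prod.mk.injEq] at h ⊢
  omega

theorem Zrect_eq_image_add (m n : ℕ) (c : ℤ × ℤ) :
    Zrect m n c = (Zrect m n (0, 0)).image (· + c) := by
  ext q
  simp only [mem_image, mem_Zrect]
  refine ⟨fun hq => ⟨q - c, by simp; omega, by simp⟩, ?_⟩
  rintro ⟨r, hr, rfl⟩
  simp only [Prod.fst_add, Prod.snd_add]
  omega

variable {k l : ℕ}

def gridCell (k l : ℕ) (ab : ℤ × ℤ) : Finset (ℤ × ℤ) := Zrect k l ((k : ℤ) * ab.1, (l : ℤ) * ab.2)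

def gridIndex (k l : ℕ) (p : ℤ × ℤ) : ℤ × ℤ := (p.1 / k, p.2 / l)

theorem mem_gridCell_iff (hk : 0 < k) (hl : 0 < l) {p ab : ℤ × ℤ} :
    p ∈ gridCell k l ab ↔ gridIndex k l p = ab := by
  rw [gridCell, mem_Zrect, gridIndex, Prod.ext_iff, Int.ediv_eq_iff_of_pos (by omega),
    Int.ediv_eq_iff_of_pos (by omega), mul_comm ab.1, mul_comm ab.2]
  tauto

theorem mem_gridCell_gridIndex (hk : 0 < k) (hl : 0 < l) (p : ℤ × ℤ) :
    p ∈ gridCell k l (gridIndex k l p) :=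
  (mem_gridCell_iff hk hl).mpr rfl

theorem card_gridCell (k l : ℕ) (ab : ℤ × ℤ) : #(gridCell k l ab) = k * l := card_Zrect _ _ _

theorem pairwiseDisjoint_gridCell (hk : 0 < k) (hl : 0 < l) (s : Set (ℤ × ℤ)) :
    s.PairwiseDisjoint (gridCell k l) := by
  intro ab _ ab' _ hne
  refine disjoint_left.mpr fun p hp hp' => hne ?_
  rw [mem_gridCell_iff hk hl] at hp hp'
  exact hp.symm.trans hp'

theorem mem_gridPart_iff (hk : 0 < k) (hl : 0 < l) {L : Finset (ℤ × ℤ)} {p : ℤ × ℤ} :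
    p ∈ gridPart k l L ↔ p ∈ L ∧ gridCell k l (gridIndex k l p) ⊆ L := by
  refine mem_filter.trans
    (and_congr_right fun _ => ⟨?_, fun h => ⟨_, _, mem_gridCell_gridIndex hk hl p, h⟩⟩)
  rintro ⟨a, b, hp, hsub⟩
  rwa [(mem_gridCell_iff hk hl).mp (show p ∈ gridCell k l (a, b) from hp)]

def gridCells (k l : ℕ) (L : Finset (ℤ × ℤ)) : Finset (ℤ × ℤ) :=
  (L.image (gridIndex k l)).filter (gridCell k l · ⊆ L)

theorem gridPart_eq_biUnion (hk : 0 < k) (hl : 0 < l) (L : Finset (ℤ × ℤ)) :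
    gridPart k l L = (gridCells k l L).biUnion (gridCell k l) := by
  ext p
  simp only [mem_gridPart_iff hk hl, mem_biUnion, gridCells, mem_filter, mem_image]
  constructor
  · rintro ⟨hp, hsub⟩
    exact ⟨_, ⟨⟨p, hp, rfl⟩, hsub⟩, mem_gridCell_gridIndex hk hl p⟩
  · rintro ⟨ab, ⟨_, hsub⟩, hp⟩
    rw [(mem_gridCell_iff hk hl).mp hp]
    exact ⟨hsub hp, hsub⟩

theorem card_gridCells_mul_le (hk : 0 < k) (hl : 0 < l) (L : Finset (ℤ × ℤ)) :
    #(gridCells k l L) * (k * l) ≤ #L := by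
  calc #(gridCells k l L) * (k * l) = #(gridPart k l L) := by
        rw [gridPart_eq_biUnion hk hl, card_biUnion (pairwiseDisjoint_gridCell hk hl _)]
        simp [card_gridCell]
    _ ≤ #L := card_le_card (filter_subset _ _)

end Grid

section Boundary

def unitSteps : Finset (ℤ × ℤ) := {(1, 0), (-1, 0), (0, 1), (0, -1)}

def edgePoints (L : Finset (ℤ × ℤ)) : Finset (ℤ × ℤ) :=
  L.filter fun u => ∃ e ∈ unitSteps, u + e ∉ L

theorem card_filter_sub_notMem_eq (L : Finset (ℤ × ℤ)) (e : ℤ × ℤ) :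
    #(L.filter (· - e ∉ L)) = #(L.filter (· + e ∉ L)) := by
  have hin : #(L.filter (· - e ∈ L)) = #(L.filter (· + e ∈ L)) :=
    card_nbij' (· - e) (· + e) (fun u hu => by simp_all) (fun u hu => by simp_all)
      (fun u _ => by simp) (fun u _ => by simp)
  have h₁ := card_filter_add_card_filter_not (s := L) (· - e ∈ L)
  have h₂ := card_filter_add_card_filter_not (s := L) (· + e ∈ L)
  omega

theorem mem_latBoundary_of_add_notMem {L : Finset (ℤ × ℤ)} {u : ℤ × ℤ} (hu : u ∈ L)
    (h : u + (1, 0) ∉ L ∨ u + (0, 1) ∉ L) : u ∈ latBoundary L := by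
  obtain ⟨a, b⟩ := u
  simp only [Prod.mk_add_mk, add_zero] at h
  rw [latBoundary, Finset.mem_sdiff, latInterior, mem_filter]
  exact ⟨hu, fun ⟨_, h₁, h₂, _⟩ => h.elim (· h₁) (· h₂)⟩

theorem card_edgePoints_le (L : Finset (ℤ × ℤ)) :
    #(edgePoints L) ≤ 3 * #(latBoundary L) := by
  have hsub : edgePoints L ⊆
      latBoundary L ∪ L.filter (· - (1, 0) ∉ L) ∪ L.filter (· - (0, 1) ∉ L) := by
    intro u hu
    obtain ⟨huL, e, he, hue⟩ := mem_filter.mp hu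
    simp only [unitSteps, mem_insert, mem_singleton] at he
    rcases he with rfl | rfl | rfl | rfl
    · simp [mem_latBoundary_of_add_notMem huL (.inl hue)]
    · simp_all [sub_eq_add_neg]
    · simp [mem_latBoundary_of_add_notMem huL (.inr hue)]
    · simp_all [sub_eq_add_neg]
  have hbd : ∀ e ∈ ({(1, 0), (0, 1)} : Finset (ℤ × ℤ)),
      #(L.filter (· - e ∉ L)) ≤ #(latBoundary L) := by
    intro e he
    rw [card_filter_sub_notMem_eq]
    refine card_le_card fun u hu => ?_
    obtain ⟨huL, hue⟩ := mem_filter.mp hu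
    simp only [mem_insert, mem_singleton] at he
    rcases he with rfl | rfl
    exacts [mem_latBoundary_of_add_notMem huL (.inl hue),
      mem_latBoundary_of_add_notMem huL (.inr hue)]
  calc #(edgePoints L) ≤ #(latBoundary L) + #(L.filter (· - (1, 0) ∉ L))
        + #(L.filter (· - (0, 1) ∉ L)) :=
        (card_le_card hsub).trans ((card_union_le _ _).trans (by gcongr; exact card_union_le _ _))
    _ ≤ 3 * #(latBoundary L) := by
        have := hbd (1, 0) (by simp)
        have := hbd (0, 1) (by simp)
        omega

/-- A point of `L ∩ R` closest to a point of `R \ L` in the `ℓ¹` distance is an edge point. -/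
theorem exists_mem_edgePoints_of_not_subset {L : Finset (ℤ × ℤ)} {m n : ℕ} {c p : ℤ × ℤ}
    (hp : p ∈ Zrect m n c) (hpL : p ∈ L) (hR : ¬ Zrect m n c ⊆ L) :
    ∃ u ∈ edgePoints L, u ∈ Zrect m n c := by
  obtain ⟨q, hqR, hqL⟩ := not_subset.mp hR
  let dist (u : ℤ × ℤ) : ℕ := (u.1 - q.1).natAbs + (u.2 - q.2).natAbs
  obtain ⟨u, hu, hmin⟩ := exists_min_image (Zrect m n c ∩ L) dist ⟨p, mem_inter.mpr ⟨hp, hpL⟩⟩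
  obtain ⟨huR, huL⟩ := mem_inter.mp hu
  have hstep : ∃ e ∈ unitSteps, u + e ∈ Zrect m n c ∧ dist (u + e) < dist u := by
    have : u ≠ q := fun h => hqL (h ▸ huL)
    obtain ⟨u₁, u₂⟩ := u
    simp only [Prod.mk_add_mk, unitSteps, mem_insert, mem_singleton, exists_eq_or_imp,
      exists_eq_left, mem_Zrect] at huR hqR ⊢
    rw [Ne, Prod.ext_iff] at this
    simp only [dist]
    omega
  obtain ⟨e, he, heR, hlt⟩ := hstep
  refine ⟨u, mem_filter.mpr ⟨huL, e, he, fun heL => ?_⟩, huR⟩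
  exact absurd (hmin _ (mem_inter.mpr ⟨heR, heL⟩)) (not_le.mpr hlt)

theorem betaKL_le {k l : ℕ} (hk : 0 < k) (hl : 0 < l) (L : Finset (ℤ × ℤ)) :
    betaKL k l L ≤ 3 * (k * l) * #(latBoundary L) := by
  have hsub : L \ gridPart k l L ⊆
      (edgePoints L).biUnion fun u => gridCell k l (gridIndex k l u) := by
    intro p hp
    obtain ⟨hpL, hpg⟩ := mem_sdiff.mp hp
    rw [mem_gridPart_iff hk hl, not_and] at hpg
    obtain ⟨u, hu, huC⟩ := exists_mem_edgePoints_of_not_subset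
      (mem_gridCell_gridIndex hk hl p) hpL (hpg hpL)
    refine mem_biUnion.mpr ⟨u, hu, ?_⟩
    rw [(mem_gridCell_iff hk hl).mp huC]
    exact mem_gridCell_gridIndex hk hl p
  calc betaKL k l L ≤ ∑ u ∈ edgePoints L, #(gridCell k l (gridIndex k l u)) :=
        (card_le_card hsub).trans card_biUnion_le
    _ = #(edgePoints L) * (k * l) := by simp [card_gridCell]
    _ ≤ 3 * #(latBoundary L) * (k * l) := Nat.mul_le_mul_right _ (card_edgePoints_le L)
    _ = 3 * (k * l) * #(latBoundary L) := mul_right_comm _ _ _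

end Boundary

section Entropy

variable {A : Type*} {U : Set ((ℤ × ℤ) → A)} {k l : ℕ}

noncomputable def rectRate (U : Set ((ℤ × ℤ) → A)) (k l : ℕ) : ℝ :=
  1 / ((k * l : ℕ) : ℝ) * log (patternCount U (Zrect k l (0, 0)))

theorem rectRate_nonneg (k l : ℕ) : 0 ≤ rectRate U k l :=
  mul_nonneg (by positivity) (log_natCast_nonneg _)

theorem bddBelow_range_rectRate :
    BddBelow (Set.range fun mn : ℕ × ℕ => rectRate U (mn.1 + 1) (mn.2 + 1)) :=
  ⟨0, Set.forall_mem_range.mpr fun _ => rectRate_nonneg _ _⟩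

theorem rectEntropy_le_rectRate (hk : 0 < k) (hl : 0 < l) : rectEntropy U ≤ rectRate U k l := by
  obtain ⟨k, rfl⟩ := Nat.exists_eq_add_one_of_ne_zero hk.ne'
  obtain ⟨l, rfl⟩ := Nat.exists_eq_add_one_of_ne_zero hl.ne'
  exact ciInf_le bddBelow_range_rectRate (k, l)

theorem exists_rectRate_lt {x : ℝ} (h : rectEntropy U < x) :
    ∃ k l, 0 < k ∧ 0 < l ∧ rectRate U k l < x := by
  obtain ⟨⟨k, l⟩, hkl⟩ := exists_lt_of_ciInf_lt h
  exact ⟨k + 1, l + 1, k.succ_pos, l.succ_pos, hkl⟩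

theorem le_rectEntropy_of_forall_le_rectRate {x : ℝ}
    (h : ∀ k l, 0 < k → 0 < l → x ≤ rectRate U k l) :
    x ≤ rectEntropy U :=
  le_ciInf fun mn => h _ _ mn.1.succ_pos mn.2.succ_pos

theorem rectEntropy_le_of_forall_sub_mul_le {y C : ℝ} (hC : 0 ≤ C)
    (h : ∀ k l, 0 < k → 0 < l → rectEntropy U - C * (rectRate U k l - rectEntropy U) ≤ y) :
    rectEntropy U ≤ y := by
  refine le_of_forall_pos_le_add fun ε hε => ?_
  obtain ⟨k, l, hk, hl, hlt⟩ := exists_rectRate_lt (U := U) (lt_add_of_pos_right _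
    (div_pos hε (by linarith : 0 < C + 1)))
  have hgap : C * (rectRate U k l - rectEntropy U) ≤ ε :=
    calc C * (rectRate U k l - rectEntropy U) ≤ C * (ε / (C + 1)) := by gcongr; linarith
      _ ≤ ε := by rw [mul_div_assoc', div_le_iff₀ (by linarith)]; linarith
  linarith [h k l hk hl]

theorem card_mul_rectRate (n : ℕ) :
    (n : ℝ) * rectRate U k l = n / (k * l) * log (patternCount U (Zrect k l (0, 0))) := by
  rw [rectRate, Nat.cast_mul]
  ring

variable [Fintype A]

theorem log_patternCount_gridPart_le (hU : U.Nonempty)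
    (hinv : ∀ v : ℤ × ℤ, ∀ x ∈ U, (fun p => x (p + v)) ∈ U) (hk : 0 < k) (hl : 0 < l)
    (L : Finset (ℤ × ℤ)) :
    log (patternCount U (gridPart k l L)) ≤
      #(gridCells k l L) * log (patternCount U (Zrect k l (0, 0))) := by
  rw [gridPart_eq_biUnion hk hl, ← nsmul_eq_mul]
  refine (log_patternCount_biUnion_le hU _ _).trans (sum_le_card_nsmul _ _ _ fun ab _ => ?_)
  rw [gridCell, Zrect_eq_image_add]
  exact log_patternCount_image_add_le hU hinv _ _

theorem log_patternCount_le_card_mul_rectRate_add (hU : U.Nonempty)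
    (hinv : ∀ v : ℤ × ℤ, ∀ x ∈ U, (fun p => x (p + v)) ∈ U) (hk : 0 < k) (hl : 0 < l)
    (L : Finset (ℤ × ℤ)) :
    log (patternCount U L) ≤
      #L * rectRate U k l + 3 * (k * l) * log (Fintype.card A) * #(latBoundary L) := by
  have hsplit : log (patternCount U L) ≤
      log (patternCount U (gridPart k l L)) + log (patternCount U (L \ gridPart k l L)) := by
    conv_lhs => rw [← union_sdiff_of_subset (filter_subset _ L : gridPart k l L ⊆ L)]
    exact log_patternCount_union_le hU _ _
  have hgrid : log (patternCount U (gridPart k l L)) ≤ #L * rectRate U k l := by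
    rw [card_mul_rectRate]
    refine (log_patternCount_gridPart_le hU hinv hk hl L).trans
      (mul_le_mul_of_nonneg_right ?_ (log_natCast_nonneg _))
    rw [le_div_iff₀ (by positivity)]
    exact_mod_cast card_gridCells_mul_le hk hl L
  have hrest : log (patternCount U (L \ gridPart k l L)) ≤
      3 * (k * l) * log (Fintype.card A) * #(latBoundary L) := by
    refine (log_patternCount_le hU _).trans ?_
    rw [mul_right_comm]
    exact mul_le_mul_of_nonneg_right (by exact_mod_cast betaKL_le hk hl L) (log_natCast_nonneg _)
  linarith

theorem entropyRatio_le_rectRate_add (hU : U.Nonempty)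
    (hinv : ∀ v : ℤ × ℤ, ∀ x ∈ U, (fun p => x (p + v)) ∈ U) (hk : 0 < k) (hl : 0 < l)
    {L : Finset (ℤ × ℤ)} (hL : L.Nonempty) :
    1 / #L * log (patternCount U L) ≤
      rectRate U k l + 3 * (k * l) * log (Fintype.card A) * (#(latBoundary L) / #L) := by
  have hL' : (0 : ℝ) < #L := by exact_mod_cast hL.card_pos
  rw [one_div_mul_eq_div, div_le_iff₀ hL', add_mul, mul_assoc _ (_ / _), div_mul_cancel₀ _ hL'.ne',
    mul_comm _ (#L : ℝ)]
  exact log_patternCount_le_card_mul_rectRate_add hU hinv hk hl L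

end Entropy

section Tessellation

theorem IsTessellation.exists_translates_cover_Zrect {T : Finset (ℤ × ℤ)} (hT : IsTessellation T) :
    ∃ d : ℕ, ∀ m : ℕ, ∃ I : Finset (ℤ × ℤ),
      Zrect m m (0, 0) ⊆ I.biUnion (fun w => T.image (· + w)) ∧ #I * #T ≤ (m + d) ^ 2 := by
  obtain ⟨v, hdisj, hcover⟩ := hT
  set D := T.sup fun t => max t.1.natAbs t.2.natAbs
  have hD : ∀ t ∈ T, t.1.natAbs ≤ D ∧ t.2.natAbs ≤ D := fun t ht =>
    max_le_iff.mp (le_sup (f := fun t => max t.1.natAbs t.2.natAbs) ht)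
  refine ⟨4 * D, fun m => ?_⟩
  -- the translation vectors of the tiles meeting the square
  set I := ((Zrect m m (0, 0)).biUnion fun p => T.image (p - ·)).filter fun w => ∃ i, v i = w
  have hdisjI : (I : Set (ℤ × ℤ)).PairwiseDisjoint fun w => T.image (· + w) := by
    intro w hw w' hw' hne
    obtain ⟨i, rfl⟩ := (mem_filter.mp hw).2
    obtain ⟨j, rfl⟩ := (mem_filter.mp hw').2
    exact hdisj i j fun h => hne (h ▸ rfl)
  have hcoverR : Zrect m m (0, 0) ⊆ I.biUnion fun w => T.image (· + w) := by
    intro p hp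
    obtain ⟨i, hi⟩ := hcover p
    obtain ⟨t, ht, rfl⟩ := mem_image.mp hi
    refine mem_biUnion.mpr ⟨v i, mem_filter.mpr ⟨mem_biUnion.mpr ⟨_, hp, ?_⟩, i, rfl⟩, hi⟩
    exact mem_image.mpr ⟨t, ht, by abel⟩
  have hbig : I.biUnion (fun w => T.image (· + w)) ⊆
      Zrect (m + 4 * D) (m + 4 * D) (-(2 * D : ℤ), -(2 * D : ℤ)) := by
    intro p hp
    obtain ⟨w, hw, hpw⟩ := mem_biUnion.mp hp
    obtain ⟨q, hq, hqw⟩ := mem_biUnion.mp (mem_filter.mp hw).1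
    obtain ⟨t, ht, rfl⟩ := mem_image.mp hpw
    obtain ⟨t', ht', rfl⟩ := mem_image.mp hqw
    have := hD t ht
    have := hD t' ht'
    simp only [mem_Zrect, Prod.fst_add, Prod.snd_add, Prod.fst_sub, Prod.snd_sub] at hq ⊢
    push_cast
    omega
  refine ⟨I, hcoverR, ?_⟩
  calc #I * #T = #(I.biUnion fun w => T.image (· + w)) := by
        rw [card_biUnion hdisjI,
          sum_const_nat fun w _ => card_image_of_injective _ (add_left_injective w)]
    _ ≤ (m + 4 * D) ^ 2 := by
        rw [sq, ← card_Zrect _ _ (-(2 * D : ℤ), -(2 * D : ℤ))]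
        exact card_le_card hbig

variable {A : Type*} [Finite A] {U : Set ((ℤ × ℤ) → A)}

theorem card_mul_rectEntropy_le (hU : U.Nonempty)
    (hinv : ∀ v : ℤ × ℤ, ∀ x ∈ U, (fun p => x (p + v)) ∈ U) {T : Finset (ℤ × ℤ)}
    (hT : IsTessellation T) :
    #T * rectEntropy U ≤ log (patternCount U T) := by
  obtain ⟨d, hcover⟩ := hT.exists_translates_cover_Zrect
  have hlogT := log_patternCount_nonneg hU T
  have hbound : ∀ m : ℕ, 0 < m → #T * rectEntropy U ≤ (1 + d / m) ^ 2 * log (patternCount U T) := by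
    intro m hm
    obtain ⟨I, hsub, hcard⟩ := hcover m
    have hm' : (0 : ℝ) < m := by exact_mod_cast hm
    have hsquare : m * m * rectEntropy U ≤ #I * log (patternCount U T) := by
      calc m * m * rectEntropy U ≤ m * m * rectRate U m m :=
            mul_le_mul_of_nonneg_left (rectEntropy_le_rectRate hm hm) (by positivity)
        _ = log (patternCount U (Zrect m m (0, 0))) := by
            rw [rectRate, Nat.cast_mul]; field_simp
        _ ≤ log (patternCount U (I.biUnion fun w => T.image (· + w))) :=
            log_patternCount_mono hU hsub
        _ ≤ ∑ w ∈ I, log (patternCount U (T.image (· + w))) := log_patternCount_biUnion_le hU _ _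
        _ ≤ #I * log (patternCount U T) := by
            rw [← nsmul_eq_mul]
            exact sum_le_card_nsmul _ _ _ fun w _ => log_patternCount_image_add_le hU hinv T w
    have hcard' : (#I : ℝ) * #T ≤ (m + d) ^ 2 := by exact_mod_cast hcard
    calc #T * rectEntropy U = #T * (m * m * rectEntropy U) / (m * m) := by field_simp
      _ ≤ #T * (#I * log (patternCount U T)) / (m * m) := by gcongr
      _ = #I * #T * log (patternCount U T) / (m * m) := by ring
      _ ≤ (m + d) ^ 2 * log (patternCount U T) / (m * m) := by gcongr
      _ = (1 + d / m) ^ 2 * log (patternCount U T) := by field_simp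
  have hlim : Tendsto (fun m : ℕ => (1 + d / m) ^ 2 * log (patternCount U T)) atTop
      (𝓝 (log (patternCount U T))) := by
    simpa using (((tendsto_const_div_atTop_nhds_zero_nat (d : ℝ)).const_add 1).pow 2).mul_const
      (log (patternCount U T))
  exact ge_of_tendsto hlim (eventually_atTop.mpr ⟨1, fun m hm => hbound m hm⟩)

end Tessellation

section Limits

theorem limsup_le_of_le_add_mul {a r : ℕ → ℝ} {c K : ℝ} (ha : ∀ n, 0 ≤ a n)
    (hr : Tendsto r atTop (𝓝 0)) (h : ∀ᶠ n in atTop, a n ≤ c + K * r n) :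
    limsup a atTop ≤ c := by
  have hlim : Tendsto (fun n => c + K * r n) atTop (𝓝 c) := by
    simpa using (hr.const_mul K).const_add c
  exact (limsup_le_limsup h (isCoboundedUnder_le_of_le atTop ha) hlim.isBoundedUnder_le).trans_eq
    hlim.limsup_eq

theorem le_limsup_of_sub_mul_le {a r : ℕ → ℝ} {c K : ℝ}
    (ha : IsBoundedUnder (· ≤ ·) atTop a) (hr : Tendsto r atTop (𝓝 0))
    (h : ∀ᶠ n in atTop, c - K * r n ≤ a n) :
    c ≤ limsup a atTop := by
  have hlim : Tendsto (fun n => c - K * r n) atTop (𝓝 c) := by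
    simpa using (hr.const_mul K).const_sub c
  exact hlim.limsup_eq.symm.trans_le
    (limsup_le_limsup h hlim.isBoundedUnder_ge.isCoboundedUnder_le ha)

theorem tendsto_zero_of_limsup_boundary_ratio {W : ℕ → Finset (ℤ × ℤ)}
    (h : limsup (fun n => (#(latBoundary (W n)) : ℝ) / #(W n)) atTop = 0) :
    Tendsto (fun n => (#(latBoundary (W n)) : ℝ) / #(W n)) atTop (𝓝 0) := by
  have hbdd : IsBoundedUnder (· ≤ ·) atTop fun n => (#(latBoundary (W n)) : ℝ) / #(W n) :=
    isBoundedUnder_of ⟨1, fun n => div_le_one_of_le₀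
      (by exact_mod_cast card_le_card sdiff_subset) (Nat.cast_nonneg _)⟩
  refine tendsto_order.2 ⟨fun b hb => Eventually.of_forall fun n => hb.trans_le (by positivity),
    fun b hb => eventually_lt_of_limsup_lt (h ▸ hb) hbdd⟩

theorem IsExpandingSystem.eventually_nonempty {Ω : ℕ → Finset (ℤ × ℤ)} (hΩ : IsExpandingSystem Ω) :
    ∀ᶠ n in atTop, (Ω n).Nonempty := by
  obtain ⟨n₀, h₀⟩ := hΩ.2 0
  have hmono : Monotone Ω := monotone_nat_of_le_succ fun n => (hΩ.1 n).subset
  exact eventually_atTop.mpr ⟨n₀, fun n hn => ⟨0, hmono hn h₀⟩⟩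

end Limits

section EntropyAlong

variable {A : Type*} [Fintype A] {U : Set ((ℤ × ℤ) → A)} {k l : ℕ}

theorem isBoundedUnder_entropyRatio (hU : U.Nonempty) (W : ℕ → Finset (ℤ × ℤ)) :
    IsBoundedUnder (· ≤ ·) atTop fun n => 1 / #(W n) * log (patternCount U (W n)) := by
  refine isBoundedUnder_of ⟨log (Fintype.card A), fun n => ?_⟩
  calc 1 / #(W n) * log (patternCount U (W n)) ≤ 1 / #(W n) * (#(W n) * log (Fintype.card A)) :=
        mul_le_mul_of_nonneg_left (log_patternCount_le hU _) (by positivity)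
    _ = #(W n) / #(W n) * log (Fintype.card A) := by ring
    _ ≤ log (Fintype.card A) :=
        mul_le_of_le_one_left (log_natCast_nonneg _) (div_self_le_one _)

theorem card_mul_rectEntropy_le_log_add (hU : U.Nonempty)
    (hinv : ∀ v : ℤ × ℤ, ∀ x ∈ U, (fun p => x (p + v)) ∈ U) (hk : 0 < k) (hl : 0 < l)
    {L T : Finset (ℤ × ℤ)} (hT : IsTessellation T) (hLT : L ⊆ T) :
    #L * rectEntropy U ≤ log (patternCount U L) + #(T \ L) * (rectRate U k l - rectEntropy U) +
      3 * (k * l) * log (Fintype.card A) * #(latBoundary (T \ L)) := by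
  have htile := card_mul_rectEntropy_le hU hinv hT
  have hsplit : log (patternCount U T) ≤
      log (patternCount U L) + log (patternCount U (T \ L)) := by
    conv_lhs => rw [← union_sdiff_of_subset hLT]
    exact log_patternCount_union_le hU _ _
  have hrest := log_patternCount_le_card_mul_rectRate_add hU hinv hk hl (T \ L)
  have hcard : (#T : ℝ) = #L + #(T \ L) := by
    exact_mod_cast (card_sdiff_add_card_eq_card hLT).symm.trans (add_comm _ _)
  rw [hcard] at htile
  linarith

theorem rectEntropy_sub_le_entropyRatio (hU : U.Nonempty)
    (hinv : ∀ v : ℤ × ℤ, ∀ x ∈ U, (fun p => x (p + v)) ∈ U) (hk : 0 < k) (hl : 0 < l)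
    {L T : Finset (ℤ × ℤ)} (hT : IsTessellation T) (hLT : L ⊂ T) (hL : L.Nonempty) {C : ℝ}
    (hC : (#(T \ L) : ℝ) / #L ≤ C) :
    rectEntropy U - C * (rectRate U k l - rectEntropy U) -
        3 * (k * l) * log (Fintype.card A) * C * (#(latBoundary (T \ L)) / #(T \ L)) ≤
      1 / #L * log (patternCount U L) := by
  have hL' : (0 : ℝ) < #L := by exact_mod_cast hL.card_pos
  have hTL : (0 : ℝ) < #(T \ L) := by
    exact_mod_cast (sdiff_nonempty.mpr (not_subset_of_ssubset hLT)).card_pos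
  have hbound := card_mul_rectEntropy_le_log_add hU hinv hk hl hT hLT.subset
  have hgap : 0 ≤ rectRate U k l - rectEntropy U := sub_nonneg.mpr (rectEntropy_le_rectRate hk hl)
  have hK : 0 ≤ 3 * (k * l) * log (Fintype.card A) * (#(latBoundary (T \ L)) / #(T \ L)) := by
    have := log_natCast_nonneg (Fintype.card A)
    positivity
  calc rectEntropy U - C * (rectRate U k l - rectEntropy U) -
        3 * (k * l) * log (Fintype.card A) * C * (#(latBoundary (T \ L)) / #(T \ L))
      ≤ rectEntropy U - #(T \ L) / #L * (rectRate U k l - rectEntropy U) -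
        3 * (k * l) * log (Fintype.card A) * (#(latBoundary (T \ L)) / #(T \ L)) *
          (#(T \ L) / #L) := by
        have h₁ := mul_le_mul_of_nonneg_right hC hgap
        have h₂ := mul_le_mul_of_nonneg_left hC hK
        linarith
    _ = (#L * rectEntropy U - #(T \ L) * (rectRate U k l - rectEntropy U) -
          3 * (k * l) * log (Fintype.card A) * #(latBoundary (T \ L))) / #L := by
        field_simp
    _ ≤ 1 / #L * log (patternCount U L) := by
        rw [one_div_mul_eq_div]
        gcongr
        linarith

end EntropyAlong

theorem entropyAlong_eq_rectEntropy_of_tessellations_general {A : Type*} [Fintype A] [TopologicalSpace A]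
    (U : Set ((ℤ × ℤ) → A)) (hU : IsShiftSpace U)
    (Ω : ℕ → Finset (ℤ × ℤ)) (hΩ : IsExpandingSystem Ω)
    (T : ℕ → Finset (ℤ × ℤ)) (hT : ∀ n, IsTessellation (T n)) (hsub : ∀ n, Ω n ⊂ T n)
    (hbd : Filter.limsup
      (fun n => ((latBoundary (Ω n)).card : ℝ) / ((Ω n).card : ℝ)) Filter.atTop = 0)
    (hbd' : Filter.limsup
      (fun n => ((latBoundary (T n \ Ω n)).card : ℝ) / (((T n \ Ω n).card : ℝ))) Filter.atTop = 0)
    (hsup : ∃ C : ℝ, ∀ n, ((T n \ Ω n).card : ℝ) / ((Ω n).card : ℝ) ≤ C) :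
    entropyAlong U Ω = rectEntropy U := by
  obtain ⟨hne, -, hinv⟩ := hU
  obtain ⟨C, hC⟩ := hsup
  have hC₀ : 0 ≤ C := (div_nonneg (Nat.cast_nonneg _) (Nat.cast_nonneg _)).trans (hC 0)
  have hΩne := hΩ.eventually_nonempty
  refine le_antisymm (le_rectEntropy_of_forall_le_rectRate fun k l hk hl => ?_)
    (rectEntropy_le_of_forall_sub_mul_le hC₀ fun k l hk hl => ?_)
  · exact limsup_le_of_le_add_mul (fun n => entropyRatio_nonneg hne _)
      (tendsto_zero_of_limsup_boundary_ratio hbd)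
      (hΩne.mono fun n hn => entropyRatio_le_rectRate_add hne hinv hk hl hn)
  · exact le_limsup_of_sub_mul_le (isBoundedUnder_entropyRatio hne Ω)
      (tendsto_zero_of_limsup_boundary_ratio hbd')
      (hΩne.mono fun n hn =>
        rectEntropy_sub_le_entropyRatio hne hinv hk hl (hT n) (hsub n) hn (hC n))

/-- Theorem 3.2: equality of entropies via tessellations. -/
theorem entropyAlong_eq_rectEntropy_of_tessellations {A : Type*} [Fintype A] [TopologicalSpace A]
    [DiscreteTopology A] (hcard : 2 ≤ Fintype.card A)
    (U : Set ((ℤ × ℤ) → A)) (hU : IsShiftSpace U)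
    (Ω : ℕ → Finset (ℤ × ℤ)) (hΩ : IsExpandingSystem Ω)
    (T : ℕ → Finset (ℤ × ℤ)) (hT : ∀ n, IsTessellation (T n)) (hsub : ∀ n, Ω n ⊂ T n)
    (hbd : Filter.limsup
      (fun n => ((latBoundary (Ω n)).card : ℝ) / ((Ω n).card : ℝ)) Filter.atTop = 0)
    (hbd' : Filter.limsup
      (fun n => ((latBoundary (T n \ Ω n)).card : ℝ) / (((T n \ Ω n).card : ℝ))) Filter.atTop = 0)
    (hsup : ∃ C : ℝ, ∀ n, ((T n \ Ω n).card : ℝ) / ((Ω n).card : ℝ) ≤ C) :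
    entropyAlong U Ω = rectEntropy U :=
  entropyAlong_eq_rectEntropy_of_tessellations_general U hU Ω hΩ T hT hsub hbd hbd' hsup
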